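/- arXiv:2011.10065 — 2 statements merged into one kernel-verified Lean document; each statement's English description precedes it below -/
import Mathlib

section
/- Let T = H^{-1/2} S H^{1/2} with H symmetric positive definite and S symmetric, let x* = T x* + b, and let x^{(k+1)} = T x^{(k)} + b. Then for any c ∈ ℝ^k with ∑_{i=1}^k c_i = 1, letting x_e = ∑_{i=1}^k c_i x^{(i-1)}, one has ‖(T - Id)(x_e - x*)‖ ≤ √κ(H) · ‖∑_{i=1}^k c_i S^{i-1}‖ · ‖(T - Id)(x^{(0)} - x*)‖. -/
/-- Euclidean norm of a vector in `ℝ^p`. -/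
noncomputable def eNorm {p : ℕ} (v : Fin p → ℝ) : ℝ := Real.sqrt (∑ i, v i ^ 2)

/-- Operator (spectral) norm of a real `p × p` matrix. -/
noncomputable def opNorm {p : ℕ} (M : Matrix (Fin p) (Fin p) ℝ) : ℝ :=
  ‖Matrix.toEuclideanCLM (𝕜 := ℝ) M‖

/-- Condition number of a symmetric matrix: largest eigenvalue over smallest. -/
noncomputable def condNum {p : ℕ} {H : Matrix (Fin p) (Fin p) ℝ} (hH : H.IsHermitian) : ℝ :=
  (⨆ i, hH.eigenvalues i) / (⨅ i, hH.eigenvalues i)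

/-- The positive semidefinite square root of a positive semidefinite matrix
(the definition removed from Mathlib, restored with its old meaning). -/
noncomputable def Matrix.PosSemidef.sqrt {n : Type*} [Fintype n] [DecidableEq n]
    {A : Matrix n n ℝ} (hA : A.PosSemidef) : Matrix n n ℝ :=
  (hA.1.eigenvectorUnitary : Matrix n n ℝ) *
    Matrix.diagonal ((fun x : ℝ => Real.sqrt x) ∘ hA.1.eigenvalues) *
    (star hA.1.eigenvectorUnitary : Matrix n n ℝ)

/-!
With `e = x⁽⁰⁾ - x*` the errors are `x⁽ⁱ⁾ - x* = Tⁱ e`, so `x_e - x* = q(T) e` for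
`q(T) = ∑ cᵢ Tⁱ`; as `q(T)` commutes with `T - 1`, the left side is `‖q(T) (T - 1) e‖`.
Conjugation gives `q(T) = H^{-1/2} q(S) H^{1/2}`, and in the spectral C⋆-norm the
unitary eigenvector factors drop out of `H^{±1/2}`, leaving
`‖H^{-1/2}‖ ‖H^{1/2}‖ = √(λ_max / λ_min) = √κ(H)`.
-/

open Matrix
open scoped Matrix.Norms.L2Operator

section EuclideanNorm

variable {p : ℕ}

lemma eNorm_eq_norm_toLp (v : Fin p → ℝ) : eNorm v = ‖WithLp.toLp 2 v‖ := by
  simp [eNorm, EuclideanSpace.norm_eq]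

lemma opNorm_eq_l2_opNorm (M : Matrix (Fin p) (Fin p) ℝ) : opNorm M = ‖M‖ := rfl

lemma eNorm_mulVec_le (M : Matrix (Fin p) (Fin p) ℝ) (v : Fin p → ℝ) :
    eNorm (M *ᵥ v) ≤ opNorm M * eNorm v := by
  simpa [eNorm_eq_norm_toLp, opNorm_eq_l2_opNorm] using l2_opNorm_mulVec M (WithLp.toLp 2 v)

end EuclideanNorm

section UnitaryConjDiagonal

variable {n : Type*} [Fintype n] [DecidableEq n]

lemma l2_opNorm_unitary_conj_diagonal {𝕜 : Type*} [RCLike 𝕜] (U : unitaryGroup n 𝕜)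
    (d : n → 𝕜) : ‖(U : Matrix n n 𝕜) * diagonal d * star (U : Matrix n n 𝕜)‖ = ‖d‖ := by
  rw [← Unitary.coe_star, CStarRing.norm_mul_coe_unitary, CStarRing.norm_coe_unitary_mul,
    l2_opNorm_diagonal]

lemma unitary_conj_diagonal_mul {R : Type*} [CommRing R] [StarRing R] (U : unitaryGroup n R)
    (d e : n → R) :
    (U : Matrix n n R) * diagonal d * star (U : Matrix n n R) *
        ((U : Matrix n n R) * diagonal e * star (U : Matrix n n R)) =
      (U : Matrix n n R) * diagonal (d * e) * star (U : Matrix n n R) := by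
  calc _ = (U : Matrix n n R) * diagonal d * (star (U : Matrix n n R) * U) * diagonal e *
        star (U : Matrix n n R) := by simp only [Matrix.mul_assoc]
    _ = _ := by
      rw [Unitary.coe_star_mul_self, Matrix.mul_one, Matrix.mul_assoc _ (diagonal d),
        diagonal_mul_diagonal']
      rfl

end UnitaryConjDiagonal

section PosDefSqrt

variable {n : Type*} [Fintype n] [DecidableEq n] {H : Matrix n n ℝ}

noncomputable def Matrix.PosDef.invSqrt (hH : H.PosDef) : Matrix n n ℝ :=
  (hH.isHermitian.eigenvectorUnitary : Matrix n n ℝ) *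
    diagonal (fun i => (Real.sqrt (hH.isHermitian.eigenvalues i))⁻¹) *
    (star hH.isHermitian.eigenvectorUnitary : Matrix n n ℝ)

lemma Matrix.PosDef.sqrt_mul_invSqrt (hH : H.PosDef) : hH.posSemidef.sqrt * hH.invSqrt = 1 := by
  rw [PosSemidef.sqrt, PosDef.invSqrt, unitary_conj_diagonal_mul]
  have hd : ((fun x : ℝ => Real.sqrt x) ∘ hH.isHermitian.eigenvalues) *
      (fun i => (Real.sqrt (hH.isHermitian.eigenvalues i))⁻¹) = fun _ => 1 := by
    ext i
    exact mul_inv_cancel₀ (Real.sqrt_pos.2 (hH.eigenvalues_pos i)).ne'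
  rw [hd, diagonal_one, Matrix.mul_one]
  exact Unitary.coe_mul_star_self _

lemma Matrix.PosDef.inv_sqrt (hH : H.PosDef) : (hH.posSemidef.sqrt)⁻¹ = hH.invSqrt :=
  inv_eq_right_inv hH.sqrt_mul_invSqrt

lemma Matrix.PosDef.isUnit_det_sqrt (hH : H.PosDef) : IsUnit (hH.posSemidef.sqrt).det :=
  isUnit_det_of_right_inverse hH.sqrt_mul_invSqrt

lemma Matrix.PosDef.l2_opNorm_sqrt_le (hH : H.PosDef) :
    ‖hH.posSemidef.sqrt‖ ≤ Real.sqrt (⨆ i, hH.isHermitian.eigenvalues i) := by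
  rw [PosSemidef.sqrt, l2_opNorm_unitary_conj_diagonal,
    pi_norm_le_iff_of_nonneg (Real.sqrt_nonneg _)]
  intro i
  rw [Function.comp_apply, Real.norm_of_nonneg (Real.sqrt_nonneg _)]
  exact Real.sqrt_le_sqrt (le_ciSup (Set.finite_range _).bddAbove i)

lemma Matrix.PosDef.l2_opNorm_inv_sqrt_le (hH : H.PosDef) :
    ‖(hH.posSemidef.sqrt)⁻¹‖ ≤ (Real.sqrt (⨅ i, hH.isHermitian.eigenvalues i))⁻¹ := by
  rw [hH.inv_sqrt, PosDef.invSqrt, l2_opNorm_unitary_conj_diagonal,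
    pi_norm_le_iff_of_nonneg (by positivity)]
  intro i
  have : Nonempty n := ⟨i⟩
  obtain ⟨j, hj⟩ := exists_eq_ciInf_of_finite (f := hH.isHermitian.eigenvalues)
  rw [Real.norm_of_nonneg (by positivity), ← hj]
  gcongr
  · exact Real.sqrt_pos.2 (hH.eigenvalues_pos j)
  · exact hj ▸ ciInf_le (Set.finite_range _).bddBelow i

end PosDefSqrt

lemma Matrix.PosDef.sqrt_condNum {p : ℕ} {H : Matrix (Fin p) (Fin p) ℝ} (hH : H.PosDef) :
    Real.sqrt (condNum hH.isHermitian) =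
      Real.sqrt (⨆ i, hH.isHermitian.eigenvalues i) *
        (Real.sqrt (⨅ i, hH.isHermitian.eigenvalues i))⁻¹ := by
  rw [condNum, Real.sqrt_div' _ (Real.iInf_nonneg fun i => (hH.eigenvalues_pos i).le),
    div_eq_mul_inv]

lemma Matrix.PosDef.opNorm_inv_sqrt_mul_mul_sqrt_le {p : ℕ} {H : Matrix (Fin p) (Fin p) ℝ}
    (hH : H.PosDef) (P : Matrix (Fin p) (Fin p) ℝ) :
    opNorm ((hH.posSemidef.sqrt)⁻¹ * P * hH.posSemidef.sqrt) ≤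
      Real.sqrt (condNum hH.isHermitian) * opNorm P := by
  simp only [opNorm_eq_l2_opNorm]
  calc _ ≤ ‖(hH.posSemidef.sqrt)⁻¹‖ * ‖P‖ * ‖hH.posSemidef.sqrt‖ :=
        (norm_mul_le _ _).trans (by gcongr; exact norm_mul_le _ _)
    _ ≤ (Real.sqrt (⨅ i, hH.isHermitian.eigenvalues i))⁻¹ * ‖P‖ *
          Real.sqrt (⨆ i, hH.isHermitian.eigenvalues i) := by
        gcongr
        · exact hH.l2_opNorm_inv_sqrt_le
        · exact hH.l2_opNorm_sqrt_le
    _ = _ := by rw [hH.sqrt_condNum]; ring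

section AffineIteration

variable {n R : Type*} [Fintype n] [DecidableEq n] [CommRing R] {T : Matrix n n R}
  {b xstar : n → R} {x : ℕ → n → R}

lemma Matrix.sum_smul_pow_inv_mul_mul {k : ℕ} {B : Matrix n n R}
    (hB : IsUnit B.det) (S : Matrix n n R) (c : Fin k → R) :
    ∑ i : Fin k, c i • (B⁻¹ * S * B) ^ (i : ℕ) = B⁻¹ * (∑ i : Fin k, c i • S ^ (i : ℕ)) * B := by
  rw [Finset.mul_sum, Finset.sum_mul]
  refine Finset.sum_congr rfl fun i _ => ?_
  rw [show (B⁻¹ * S * B) ^ (i : ℕ) = B⁻¹ * S ^ (i : ℕ) * B from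
    Units.conj_pow' (nonsingInvUnit B hB) S i, mul_smul_comm, smul_mul_assoc]

lemma sub_fixedPoint_eq_pow_mulVec (hfix : T *ᵥ xstar + b = xstar)
    (hx : ∀ m, x (m + 1) = T *ᵥ x m + b) (m : ℕ) : x m - xstar = (T ^ m) *ᵥ (x 0 - xstar) := by
  induction m with
  | zero => rw [pow_zero, one_mulVec]
  | succ m ih =>
    rw [pow_succ', ← mulVec_mulVec, ← ih, mulVec_sub, hx m]
    nth_rw 1 [← hfix]
    abel

lemma sum_smul_sub_fixedPoint {k : ℕ} (hfix : T *ᵥ xstar + b = xstar)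
    (hx : ∀ m, x (m + 1) = T *ᵥ x m + b) {c : Fin k → R} (hc : ∑ i, c i = 1) :
    (∑ i : Fin k, c i • x i) - xstar =
      (∑ i : Fin k, c i • T ^ (i : ℕ)) *ᵥ (x 0 - xstar) := by
  calc (∑ i : Fin k, c i • x i) - xstar = ∑ i : Fin k, c i • (x i - xstar) := by
        simp only [smul_sub, Finset.sum_sub_distrib, ← Finset.sum_smul, hc, one_smul]
    _ = _ := by
        rw [Matrix.sum_mulVec]
        exact Finset.sum_congr rfl fun i _ => by
          rw [sub_fixedPoint_eq_pow_mulVec hfix hx, smul_mulVec]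

end AffineIteration

theorem stmt_5_general {p k : ℕ} (H S : Matrix (Fin p) (Fin p) ℝ)
    (hH : H.PosDef)
    (T : Matrix (Fin p) (Fin p) ℝ)
    (hT : T = (hH.posSemidef.sqrt)⁻¹ * S * hH.posSemidef.sqrt)
    (b xstar : Fin p → ℝ) (hfix : T.mulVec xstar + b = xstar)
    (x : ℕ → Fin p → ℝ) (hx : ∀ m, x (m + 1) = T.mulVec (x m) + b)
    (c : Fin k → ℝ) (hc : ∑ i, c i = 1) :
    eNorm ((T - 1).mulVec ((∑ i : Fin k, c i • x i) - xstar)) ≤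
      Real.sqrt (condNum hH.isHermitian) * opNorm (∑ i : Fin k, c i • S ^ (i : ℕ)) *
        eNorm ((T - 1).mulVec (x 0 - xstar)) := by
  have hQ : Commute (T - 1) (∑ i : Fin k, c i • T ^ (i : ℕ)) :=
    (Commute.sum_right _ _ _ fun i _ => ((Commute.refl T).pow_right _).smul_right _).sub_left
      (Commute.one_left _)
  have hQ_conj : ∑ i : Fin k, c i • T ^ (i : ℕ) = (hH.posSemidef.sqrt)⁻¹ *
      (∑ i : Fin k, c i • S ^ (i : ℕ)) * hH.posSemidef.sqrt :=
    hT ▸ sum_smul_pow_inv_mul_mul hH.isUnit_det_sqrt S c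
  calc eNorm ((T - 1) *ᵥ ((∑ i : Fin k, c i • x i) - xstar))
      = eNorm ((∑ i : Fin k, c i • T ^ (i : ℕ)) *ᵥ ((T - 1) *ᵥ (x 0 - xstar))) := by
        rw [sum_smul_sub_fixedPoint hfix hx hc, mulVec_mulVec, hQ.eq, mulVec_mulVec]
    _ ≤ opNorm (∑ i : Fin k, c i • T ^ (i : ℕ)) * eNorm ((T - 1) *ᵥ (x 0 - xstar)) :=
        eNorm_mulVec_le _ _
    _ ≤ _ := by
        rw [hQ_conj]
        gcongr
        · exact Real.sqrt_nonneg _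
        · exact hH.opNorm_inv_sqrt_mul_mul_sqrt_le _

theorem stmt_5 {p k : ℕ} (H S : Matrix (Fin p) (Fin p) ℝ)
    (hH : H.PosDef) (hS : S.IsHermitian)
    (T : Matrix (Fin p) (Fin p) ℝ)
    (hT : T = (hH.posSemidef.sqrt)⁻¹ * S * hH.posSemidef.sqrt)
    (b xstar : Fin p → ℝ) (hfix : T.mulVec xstar + b = xstar)
    (x : ℕ → Fin p → ℝ) (hx : ∀ m, x (m + 1) = T.mulVec (x m) + b)
    (c : Fin k → ℝ) (hc : ∑ i, c i = 1) :
    eNorm ((T - 1).mulVec ((∑ i : Fin k, c i • x i) - xstar)) ≤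
      Real.sqrt (condNum hH.isHermitian) * opNorm (∑ i : Fin k, c i • S ^ (i : ℕ)) *
        eNorm ((T - 1).mulVec (x 0 - xstar)) :=
  stmt_5_general H S hH T hT b xstar hfix x hx c hc
end

section
/- Let S ∈ ℝ^{p×p} be symmetric positive semidefinite with spectral radius ρ = ρ(S) < 1, and let ζ = (1 - √(1-ρ))/(1 + √(1-ρ)). Then there exists a polynomial P of degree at most k-1 with P(1) = 1 (the rescaled shifted Chebyshev polynomial) such that ‖P(S)‖ ≤ 2ζ^{k-1}/(1 + ζ^{2(k-1)}). -/
open Polynomial Polynomial.Chebyshev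

theorem Polynomial.Chebyshev.two_mul_eval_T_of_mul_eq_one {R : Type*} [CommRing R] {x y t : R}
    (hxy : x * y = 1) (ht : 2 * t = x + y) (n : ℕ) :
    2 * (T R n).eval t = x ^ n + y ^ n := by
  have h := congrArg (eval t) (C_comp_two_mul_X R n)
  rw [eval_comp, eval_mul, eval_X, eval_ofNat, ht, ← dickson_one_one_eq_chebyshev_C,
    dickson_one_one_eval_add_inv x y hxy] at h
  rw [h, eval_mul, eval_ofNat]

theorem inv_eval_T_two_div_sub_one {ρ ζ : ℝ} (hρ : 0 < ρ) (hρ1 : ρ < 1)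
    (hζ : ζ = (1 - √(1 - ρ)) / (1 + √(1 - ρ))) (n : ℕ) :
    ((T ℝ n).eval (2 / ρ - 1))⁻¹ = 2 * ζ ^ n / (1 + ζ ^ (2 * n)) := by
  set s := √(1 - ρ)
  have hs : s ^ 2 = 1 - ρ := Real.sq_sqrt (by linarith)
  have hs0 : 0 ≤ s := Real.sqrt_nonneg _
  have hs1 : 1 - s ≠ 0 := by nlinarith
  have hζ0 : ζ ≠ 0 := by rw [hζ]; exact div_ne_zero hs1 (by linarith)
  have ht : 2 * (2 / ρ - 1) = ζ + ζ⁻¹ := by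
    rw [hζ, inv_div]
    field_simp
    linear_combination (-4) * hs
  have hT := two_mul_eval_T_of_mul_eq_one (mul_inv_cancel₀ hζ0) ht n
  rw [show (T ℝ n).eval (2 / ρ - 1) = (ζ ^ n + ζ⁻¹ ^ n) / 2 by linarith, inv_pow, pow_mul']
  field_simp
  ring

/-- `T_n((2x - ρ)/ρ) / T_n((2 - ρ)/ρ)`. -/
noncomputable def shiftedChebyshevT (ρ : ℝ) (n : ℕ) : ℝ[X] :=
  C ((T ℝ n).eval (2 / ρ - 1))⁻¹ * (T ℝ n).comp (C (2 / ρ) * X - 1)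

namespace shiftedChebyshevT

theorem natDegree_le (ρ : ℝ) (n : ℕ) : (shiftedChebyshevT ρ n).natDegree ≤ n := by
  refine natDegree_C_mul_le _ _ |>.trans <| natDegree_comp_le.trans ?_
  have : (C (2 / ρ) * X - 1 : ℝ[X]).natDegree ≤ 1 := by compute_degree
  simpa [natDegree_T] using Nat.mul_le_mul_left n this

variable {ρ : ℝ} (hρ : 0 < ρ) (hρ1 : ρ ≤ 1) (n : ℕ)
include hρ hρ1

theorem one_le_eval_T : 1 ≤ (T ℝ n).eval (2 / ρ - 1) :=
  one_le_eval_T_real n (by rw [le_sub_iff_add_le, one_add_one_eq_two, le_div_iff₀ hρ]; linarith)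

theorem eval_one : (shiftedChebyshevT ρ n).eval 1 = 1 := by
  simp only [shiftedChebyshevT, eval_mul, eval_C, eval_comp, eval_sub, eval_X,
    Polynomial.eval_one, mul_one]
  exact inv_mul_cancel₀ (zero_lt_one.trans_le (one_le_eval_T hρ hρ1 n)).ne'

theorem abs_eval_le {x : ℝ} (hx : x ∈ Set.Icc 0 ρ) :
    |(shiftedChebyshevT ρ n).eval x| ≤ ((T ℝ n).eval (2 / ρ - 1))⁻¹ := by
  have hT : |(T ℝ n).eval (2 / ρ * x - 1)| ≤ 1 := by
    refine abs_eval_T_real_le_one n (abs_le.2 ⟨?_, ?_⟩)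
    · have := mul_nonneg (div_nonneg zero_le_two hρ.le) hx.1
      linarith
    · rw [sub_le_iff_le_add, one_add_one_eq_two, div_mul_eq_mul_div, div_le_iff₀ hρ]
      linarith [hx.2]
  have hc := inv_pos.2 (zero_lt_one.trans_le (one_le_eval_T hρ hρ1 n))
  simp only [shiftedChebyshevT, eval_mul, eval_C, eval_comp, eval_sub, eval_X,
    Polynomial.eval_one, abs_mul, abs_of_pos hc]
  exact mul_le_of_le_one_right hc.le hT

end shiftedChebyshevT

theorem exists_natDegree_le_eval_one_abs_eval_le {ρ ζ : ℝ} (hρ0 : 0 ≤ ρ) (hρ1 : ρ < 1)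
    (hζ : ζ = (1 - √(1 - ρ)) / (1 + √(1 - ρ))) (n : ℕ) :
    ∃ P : ℝ[X], P.natDegree ≤ n ∧ P.eval 1 = 1 ∧
      ∀ x ∈ Set.Icc 0 ρ, |P.eval x| ≤ 2 * ζ ^ n / (1 + ζ ^ (2 * n)) := by
  rcases hρ0.eq_or_lt with rfl | hρ
  · refine ⟨X ^ n, (natDegree_X_pow n).le, by simp, fun x hx => ?_⟩
    obtain rfl : x = 0 := le_antisymm hx.2 hx.1
    have : ζ = 0 := by simp [hζ]
    cases n <;> norm_num [this]
  · refine ⟨shiftedChebyshevT ρ n, shiftedChebyshevT.natDegree_le ρ n,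
      shiftedChebyshevT.eval_one hρ hρ1.le n, fun x hx => ?_⟩
    rw [← inv_eval_T_two_div_sub_one hρ hρ1 hζ n]
    exact shiftedChebyshevT.abs_eval_le hρ hρ1.le n hx

open scoped Matrix.Norms.L2Operator in
theorem Matrix.IsHermitian.l2_opNorm_cfc_le {n 𝕜 : Type*} [RCLike 𝕜] [Fintype n] [DecidableEq n]
    {A : Matrix n n 𝕜} (hA : A.IsHermitian) (f : ℝ → ℝ) {b : ℝ} (hb : 0 ≤ b)
    (h : ∀ i, |f (hA.eigenvalues i)| ≤ b) : ‖cfc f A‖ ≤ b := by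
  rw [hA.cfc_eq, IsHermitian.cfc, Unitary.conjStarAlgAut_apply,
    CStarRing.norm_mul_mem_unitary _ (Unitary.star_mem hA.eigenvectorUnitary.2),
    CStarRing.norm_coe_unitary_mul, l2_opNorm_diagonal]
  exact (pi_norm_le_iff_of_nonneg hb).2 fun i => by simpa using h i

theorem opNorm_aeval_le {p : ℕ} {A : Matrix (Fin p) (Fin p) ℝ} (hA : A.IsHermitian) (P : ℝ[X])
    {b : ℝ} (hb : 0 ≤ b) (h : ∀ i, |P.eval (hA.eigenvalues i)| ≤ b) :
    opNorm (aeval A P) ≤ b := by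
  rw [← cfc_polynomial P A hA.isSelfAdjoint]
  exact hA.l2_opNorm_cfc_le _ hb h

theorem stmt_7_general {p k : ℕ}
    (S : Matrix (Fin p) (Fin p) ℝ) (hS : S.PosSemidef)
    (ρ : ℝ) (hρ : ρ = ⨆ i, hS.1.eigenvalues i) (hρ1 : ρ < 1)
    (ζ : ℝ) (hζ : ζ = (1 - Real.sqrt (1 - ρ)) / (1 + Real.sqrt (1 - ρ))) :
    ∃ P : Polynomial ℝ, P.natDegree ≤ k - 1 ∧ P.eval 1 = 1 ∧
      opNorm (Polynomial.aeval S P) ≤ 2 * ζ ^ (k - 1) / (1 + ζ ^ (2 * (k - 1))) := by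
  have hρ0 : 0 ≤ ρ := hρ ▸ Real.iSup_nonneg hS.eigenvalues_nonneg
  have hspec : ∀ i, hS.1.eigenvalues i ∈ Set.Icc 0 ρ := fun i =>
    ⟨hS.eigenvalues_nonneg i, hρ ▸ le_ciSup (Set.finite_range _).bddAbove i⟩
  obtain ⟨P, hdeg, hP1, hP⟩ := exists_natDegree_le_eval_one_abs_eval_le hρ0 hρ1 hζ (k - 1)
  exact ⟨P, hdeg, hP1, opNorm_aeval_le hS.1 P ((abs_nonneg _).trans (hP 0 ⟨le_rfl, hρ0⟩))
    fun i => hP _ (hspec i)⟩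

/-- Chebyshev-type bound: for `S` symmetric positive semidefinite with spectral radius
`ρ < 1`, there is a polynomial of degree at most `k - 1` taking value `1` at `1` with
`‖P(S)‖ ≤ 2ζ^{k-1}/(1 + ζ^{2(k-1)})` where `ζ = (1 - √(1-ρ))/(1 + √(1-ρ))`. -/
theorem stmt_7 {p k : ℕ} (hp : 0 < p) (hk : 1 ≤ k)
    (S : Matrix (Fin p) (Fin p) ℝ) (hS : S.PosSemidef)
    (ρ : ℝ) (hρ : ρ = ⨆ i, hS.1.eigenvalues i) (hρ1 : ρ < 1)
    (ζ : ℝ) (hζ : ζ = (1 - Real.sqrt (1 - ρ)) / (1 + Real.sqrt (1 - ρ))) :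
    ∃ P : Polynomial ℝ, P.natDegree ≤ k - 1 ∧ P.eval 1 = 1 ∧
      opNorm (Polynomial.aeval S P) ≤ 2 * ζ ^ (k - 1) / (1 + ζ ^ (2 * (k - 1))) :=
  stmt_7_general S hS ρ hρ hρ1 ζ hζ
end
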